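/- arXiv:2205.13262 — 3 statements merged into one kernel-verified Lean document; each statement's English description precedes it below -/
import Mathlib

section
/- Let n ≥ 1, k ≥ 1 be integers and let f be a real-analytic vector field on a neighborhood U of 0 in ℝⁿ with Taylor expansion f(x) = Σ_{j ≥ k} f_j(x) at 0, where each component of f_j is a homogeneous polynomial of degree j and f_k ≠ 0. Let F be a real-analytic function on U with F(0) = 0, not identically zero near 0, that is a first integral of ẋ = f(x), i.e., DF(x)ᵀ f(x) = 0 on U. Let ℓ be the smallest integer such that the degree-ℓ homogeneous Taylor part F_ℓ of F at 0 is nonzero. Then F_ℓ is a first integral of the truncated system ẏ = f_k(y), i.e., DF_ℓ(y)ᵀ f_k(y) = 0 for all y ∈ ℝⁿ. -/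
/-!
Rescale along a ray `t • y`. Since `F - F_ℓ` has vanishing Taylor coefficients up to degree `ℓ`,
its derivative is `O(‖x‖^ℓ)`, so `t⁻ℓ · t · DF(t y) → DF_ℓ(y)`; likewise `t⁻ᵏ f(t y) → f_k(y)`.
Applying the first limit to the second, the identity `DF(t y) f(t y) = 0` passes to the limit
`t → 0`.
-/

open Filter Asymptotics Topology

section

variable {𝕜 E F : Type*} [NontriviallyNormedField 𝕜] [NormedAddCommGroup E] [NormedSpace 𝕜 E]
  [NormedAddCommGroup F] [NormedSpace 𝕜 F]

namespace FormalMultilinearSeries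

variable (p : FormalMultilinearSeries 𝕜 E F)

def trunc (m : ℕ) : FormalMultilinearSeries 𝕜 E F := fun j => if j < m then p j else 0

lemma trunc_eq_zero {m j : ℕ} (h : m ≤ j) : p.trunc m j = 0 := if_neg h.not_gt

lemma sum_trunc (m : ℕ) (x : E) : (p.trunc m).sum x = p.partialSum m x := by
  rw [FormalMultilinearSeries.sum_of_finite _ (fun j => p.trunc_eq_zero) x]
  exact Finset.sum_congr rfl fun j hj => by simp [trunc, Finset.mem_range.1 hj]

lemma partialSum_succ_of_apply_diag_eq_zero {m : ℕ} (hp : ∀ j < m, ∀ x, (p j fun _ => x) = 0)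
    (x : E) : p.partialSum (m + 1) x = p m fun _ => x := by
  rw [partialSum, Finset.sum_range_succ,
    Finset.sum_eq_zero fun j hj => hp j (Finset.mem_range.1 hj) x, zero_add]

lemma apply_diag_smul (m : ℕ) (c : 𝕜) (x : E) :
    (p m fun _ => c • x) = c ^ m • p m fun _ => x := by
  simpa using (p m).map_smul_univ (fun _ => c) fun _ => x

lemma differentiable_apply_diag (m : ℕ) : Differentiable 𝕜 fun x : E => p m fun _ => x :=
  ((p m).contDiff.comp (contDiff_pi.2 fun _ => contDiff_id) :
    ContDiff 𝕜 1 _).differentiable one_ne_zero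

end FormalMultilinearSeries

theorem HasFPowerSeriesAt.sub_partialSum {f : E → F} {p : FormalMultilinearSeries 𝕜 E F}
    (hf : HasFPowerSeriesAt f p 0) (m : ℕ) :
    HasFPowerSeriesAt (fun x => f x - p.partialSum m x) (p - p.trunc m) 0 := by
  have hpoly := ((p.trunc m).hasFiniteFPowerSeriesOnBall_of_finite
    fun j => p.trunc_eq_zero).toHasFPowerSeriesOnBall.hasFPowerSeriesAt
  convert hf.sub hpoly using 1
  exact funext fun x => by simp [p.sum_trunc]

theorem HasFPowerSeriesAt.isBigO_fderiv_sub_partialSum [CompleteSpace F] {f : E → F}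
    {p : FormalMultilinearSeries 𝕜 E F} (hf : HasFPowerSeriesAt f p 0) (m : ℕ) :
    (fun x => fderiv 𝕜 (fun z => f z - p.partialSum (m + 1) z) x) =O[𝓝 0] fun x => ‖x‖ ^ m := by
  obtain ⟨r, hr⟩ := hf.sub_partialSum (m + 1)
  -- `derivSeries_eq_zero` needs vanishing coefficients, not merely vanishing diagonals: this is
  -- why the partial sum is subtracted before differentiating.
  have hlow : ∀ x, (p - p.trunc (m + 1)).derivSeries.partialSum m x = 0 := fun x => by
    refine Finset.sum_eq_zero fun j hj => ?_
    rw [FormalMultilinearSeries.derivSeries_eq_zero]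
    · rfl
    · have : j + 1 < m + 1 := by simpa using Finset.mem_range.1 hj
      simp [FormalMultilinearSeries.trunc, this]
  simpa [hlow] using hr.fderiv.hasFPowerSeriesAt.isBigO_sub_partialSum_pow m

theorem tendsto_inv_pow_smul_of_isBigO {g : 𝕜 → F} {c : F} {m : ℕ}
    (h : (fun t => g t - t ^ m • c) =O[𝓝 0] fun t => t ^ (m + 1)) :
    Tendsto (fun t => (t ^ m)⁻¹ • g t) (𝓝[≠] 0) (𝓝 c) := by
  have hsmall : Tendsto (fun t => (t ^ m)⁻¹ • (g t - t ^ m • c)) (𝓝[≠] 0) (𝓝 0) := by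
    refine ((isBigO_refl (fun t : 𝕜 => (t ^ m)⁻¹) _).smul (h.mono nhdsWithin_le_nhds))
      |>.trans_tendsto ?_
    refine (tendsto_nhdsWithin_of_tendsto_nhds tendsto_id).congr' ?_
    filter_upwards [self_mem_nhdsWithin] with t (ht : t ≠ 0)
    simp [pow_succ, ht]
  have hlim := hsmall.const_add c
  rw [add_zero] at hlim
  refine hlim.congr' ?_
  filter_upwards [self_mem_nhdsWithin] with t (ht : t ≠ 0)
  rw [smul_sub, smul_smul, inv_mul_cancel₀ (pow_ne_zero m ht), one_smul, add_sub_cancel]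

theorem Asymptotics.IsBigO.comp_smul {G : Type*} [NormedAddCommGroup G] {φ : E → G} {m : ℕ}
    (h : φ =O[𝓝 0] fun x => ‖x‖ ^ m) (y : E) :
    (fun t : 𝕜 => φ (t • y)) =O[𝓝 0] fun t => t ^ m := by
  refine (h.comp_tendsto (tendsto_id.zero_smul_const y)).trans
    (IsBigO.of_bound (‖y‖ ^ m) (Eventually.of_forall fun t => ?_))
  simp [norm_smul, mul_pow, mul_comm]

theorem smul_fderiv_smul_of_homogeneous {Q : E → F} {m : ℕ}
    (hQ : ∀ (c : 𝕜) z, Q (c • z) = c ^ m • Q z) (c : 𝕜) (y : E) :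
    c • fderiv 𝕜 Q (c • y) = c ^ m • fderiv 𝕜 Q y := by
  rw [← fderiv_comp_smul, ← Pi.smul_apply (a := c ^ m), ← fderiv_const_smul_field]
  congr 1
  exact funext fun z => hQ c z

theorem HasFPowerSeriesAt.tendsto_inv_pow_smul_comp_smul {f : E → F}
    {p : FormalMultilinearSeries 𝕜 E F} {m : ℕ} (hf : HasFPowerSeriesAt f p 0)
    (hp : ∀ j < m, ∀ x, (p j fun _ => x) = 0) (y : E) :
    Tendsto (fun t : 𝕜 => (t ^ m)⁻¹ • f (t • y)) (𝓝[≠] 0) (𝓝 (p m fun _ => y)) := by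
  have h := hf.isBigO_sub_partialSum_pow (m + 1)
  simp only [zero_add, p.partialSum_succ_of_apply_diag_eq_zero hp] at h
  refine tendsto_inv_pow_smul_of_isBigO ?_
  simpa only [p.apply_diag_smul] using h.comp_smul (𝕜 := 𝕜) y

theorem HasFPowerSeriesAt.tendsto_inv_pow_smul_fderiv_smul [CompleteSpace F] {f : E → F}
    {p : FormalMultilinearSeries 𝕜 E F} {m : ℕ} (hf : HasFPowerSeriesAt f p 0)
    (hp : ∀ j < m, ∀ x, (p j fun _ => x) = 0) (y : E) :
    Tendsto (fun t : 𝕜 => (t ^ m)⁻¹ • t • fderiv 𝕜 f (t • y)) (𝓝[≠] 0)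
      (𝓝 (fderiv 𝕜 (fun x => p m fun _ => x) y)) := by
  set P : E → F := fun x => p m fun _ => x
  have hP : p.partialSum (m + 1) = P := funext (p.partialSum_succ_of_apply_diag_eq_zero hp)
  have hrem := (hf.isBigO_fderiv_sub_partialSum m).comp_smul (𝕜 := 𝕜) y
  rw [hP] at hrem
  have hdiff : ∀ᶠ t : 𝕜 in 𝓝 0, DifferentiableAt 𝕜 f (t • y) :=
    (tendsto_id.zero_smul_const y).eventually hf.eventually_differentiableAt
  refine tendsto_inv_pow_smul_of_isBigO ?_
  refine ((isBigO_refl (fun t : 𝕜 => t) _).smul hrem).congr' ?_ ?_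
  · filter_upwards [hdiff] with t ht
    rw [fderiv_fun_sub ht (p.differentiable_apply_diag m _), smul_sub,
      smul_fderiv_smul_of_homogeneous (Q := P) (p.apply_diag_smul m) t y]
  · exact Eventually.of_forall fun t => (pow_succ' t m).symm

end

theorem leading_part_first_integral_general (n k ℓ : ℕ)
    (U : Set (Fin n → ℝ)) (hU : IsOpen U) (h0U : (0 : Fin n → ℝ) ∈ U)
    (f : (Fin n → ℝ) → (Fin n → ℝ))
    (p : FormalMultilinearSeries ℝ (Fin n → ℝ) (Fin n → ℝ))
    (hf : HasFPowerSeriesAt f p 0)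
    (hplow : ∀ j < k, ∀ x, (p j fun _ => x) = 0)
    (F : (Fin n → ℝ) → ℝ)
    (q : FormalMultilinearSeries ℝ (Fin n → ℝ) ℝ)
    (hF : HasFPowerSeriesAt F q 0)
    (hfirst : ∀ x ∈ U, fderiv ℝ F x (f x) = 0)
    -- `ℓ` is the smallest degree with nonvanishing homogeneous Taylor part of `F`
    (hqlow : ∀ j < ℓ, ∀ x, (q j fun _ => x) = 0) :
    ∀ y, fderiv ℝ (fun z => q ℓ fun _ => z) y (p k fun _ => y) = 0 := by
  intro y
  have hlim := (isBoundedBilinearMap_apply.continuous.tendsto _).comp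
    ((hF.tendsto_inv_pow_smul_fderiv_smul hqlow y).prodMk_nhds
      (hf.tendsto_inv_pow_smul_comp_smul hplow y))
  refine tendsto_nhds_unique hlim (tendsto_const_nhds.congr' ?_)
  have hyU : ∀ᶠ t : ℝ in 𝓝[≠] 0, t • y ∈ U :=
    ((tendsto_id.zero_smul_const y).eventually (hU.mem_nhds h0U)).filter_mono nhdsWithin_le_nhds
  filter_upwards [hyU] with t ht
  simp [hfirst _ ht]

/-- If `F` is an analytic first integral (vanishing at `0`, not identically zero) of the
real-analytic system `ẋ = f(x)`, where the Taylor expansion of `f` at `0` starts with the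
nonzero homogeneous part `f_k` of degree `k`, then the leading homogeneous Taylor part
`F_ℓ` of `F` at `0` is a first integral of the truncated system `ẏ = f_k(y)`.
The degree-`j` homogeneous Taylor parts are `y ↦ p j (y, …, y)` and `y ↦ q j (y, …, y)`,
where `p, q` are the power series of `f, F` at `0`. -/
theorem leading_part_first_integral (n k ℓ : ℕ) (hn : 1 ≤ n) (hk : 1 ≤ k)
    (U : Set (Fin n → ℝ)) (hU : IsOpen U) (h0U : (0 : Fin n → ℝ) ∈ U)
    (f : (Fin n → ℝ) → (Fin n → ℝ)) (hfa : AnalyticOnNhd ℝ f U)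
    (p : FormalMultilinearSeries ℝ (Fin n → ℝ) (Fin n → ℝ))
    (hf : HasFPowerSeriesAt f p 0)
    (hplow : ∀ j < k, ∀ x, (p j fun _ => x) = 0)
    (hfk : ∃ x, (p k fun _ => x) ≠ 0)
    (F : (Fin n → ℝ) → ℝ) (hFa : AnalyticOnNhd ℝ F U) (hF0 : F 0 = 0)
    (q : FormalMultilinearSeries ℝ (Fin n → ℝ) ℝ)
    (hF : HasFPowerSeriesAt F q 0)
    (hfirst : ∀ x ∈ U, fderiv ℝ F x (f x) = 0)
    -- `ℓ` is the smallest degree with nonvanishing homogeneous Taylor part of `F`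
    (hqlow : ∀ j < ℓ, ∀ x, (q j fun _ => x) = 0)
    (hqℓ : ∃ x, (q ℓ fun _ => x) ≠ 0) :
    ∀ y, fderiv ℝ (fun z => q ℓ fun _ => z) y (p k fun _ => y) = 0 :=
  leading_part_first_integral_general n k ℓ U hU h0U f p hf hplow F q hF hfirst hqlow
end

section
/- Let α₁, α₃, α₄ ∈ ℝ with α₁ ≠ 0. On the open half-plane D = {(r, x₃) ∈ ℝ² : r > 0}, the function Q(r, x₃) = r^{−2α₄/α₁} (α₃ r² + (α₄ − α₁) x₃²) is a first integral of the planar system ṙ = α₁ r x₃, ẋ₃ = α₃ r² + α₄ x₃²; that is, for all (r, x₃) ∈ D, ∂Q/∂r(r, x₃) · α₁ r x₃ + ∂Q/∂x₃(r, x₃) · (α₃ r² + α₄ x₃²) = 0. -/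
/-! Write `Q = r^c · (α₃ r² + (α₄ - α₁) x₃²)` with `c = -2α₄/α₁`. Both terms of `DQ · p` carry the
factor `r^(c-1) · r · x₃`, and what remains is linear in `α₁ c`; substituting `α₁ c = -2α₄` makes it
vanish identically. -/

open Real

lemma hasDerivAt_rpow_mul_quadratic (c a b : ℝ) {r : ℝ} (hr : r ≠ 0) :
    HasDerivAt (fun s : ℝ => s ^ c * (a * s ^ 2 + b))
      (r ^ (c - 1) * (c * (a * r ^ 2 + b) + 2 * a * r ^ 2)) r := by
  refine ((hasDerivAt_rpow_const (p := c) (Or.inl hr)).mul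
    (((hasDerivAt_pow 2 r).const_mul a).add_const b)).congr_deriv ?_
  rw [rpow_sub_one hr]
  field_simp
  ring

lemma hasDerivAt_const_mul_add_mul_sq (k a b x : ℝ) :
    HasDerivAt (fun s : ℝ => k * (a + b * s ^ 2)) (k * (2 * b * x)) x := by
  refine ((((hasDerivAt_pow 2 x).const_mul b).const_add a).const_mul k).congr_deriv ?_
  ring

lemma first_integral_of_mul_exponent_eq {α₁ α₃ α₄ c : ℝ} (hc : α₁ * c = -2 * α₄)
    {r : ℝ} (hr : r ≠ 0) (x₃ : ℝ) :
    deriv (fun s : ℝ => s ^ c * (α₃ * s ^ 2 + (α₄ - α₁) * x₃ ^ 2)) r * (α₁ * r * x₃)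
      + deriv (fun s : ℝ => r ^ c * (α₃ * r ^ 2 + (α₄ - α₁) * s ^ 2)) x₃
        * (α₃ * r ^ 2 + α₄ * x₃ ^ 2) = 0 := by
  have hpow : r ^ c = r ^ (c - 1) * r := by rw [← rpow_add_one hr, sub_add_cancel]
  rw [(hasDerivAt_rpow_mul_quadratic c α₃ _ hr).deriv,
    (hasDerivAt_const_mul_add_mul_sq _ _ _ x₃).deriv, hpow]
  linear_combination r ^ (c - 1) * r * x₃ * (α₃ * r ^ 2 + (α₄ - α₁) * x₃ ^ 2) * hc

/-- On the half-plane `r > 0`, the function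
`Q(r, x₃) = r^(−2α₄/α₁) (α₃ r² + (α₄ − α₁) x₃²)` is a first integral of the planar
system `ṙ = α₁ r x₃`, `ẋ₃ = α₃ r² + α₄ x₃²` (partial derivatives taken as derivatives
of the one-variable slices). -/
theorem first_integral_foldHopf_planar (α₁ α₃ α₄ : ℝ) (hα₁ : α₁ ≠ 0) :
    ∀ r x₃ : ℝ, 0 < r →
      deriv (fun s : ℝ => s ^ (-2 * α₄ / α₁) * (α₃ * s ^ 2 + (α₄ - α₁) * x₃ ^ 2)) r
          * (α₁ * r * x₃)
        + deriv (fun s : ℝ => r ^ (-2 * α₄ / α₁) * (α₃ * r ^ 2 + (α₄ - α₁) * s ^ 2)) x₃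
          * (α₃ * r ^ 2 + α₄ * x₃ ^ 2) = 0 := fun r x₃ hr =>
  first_integral_of_mul_exponent_eq (mul_div_cancel₀ _ hα₁) hr.ne' x₃
end

section
/- Let α₁, α₂, α₃, α₄ ∈ ℝ with α₁ ≠ α₃. On the open set D = {(r₁, r₂) ∈ ℝ² : r₁ > 0, r₂ > 0, (α₁ − α₃) r₁² + (α₂ − α₄) r₂² > 0}, the function Q(r₁, r₂) = (r₁^{α₄} / r₂^{α₂})^{2(α₁ − α₃)} · ((α₁ − α₃) r₁²/r₂² + α₂ − α₄)^{α₂α₃ − α₁α₄} is a first integral of the planar system ṙ₁ = (α₁ r₁² + α₂ r₂²) r₁, ṙ₂ = (α₃ r₁² + α₄ r₂²) r₂; that is, for all (r₁, r₂) ∈ D, ∂Q/∂r₁(r₁, r₂) · (α₁r₁² + α₂r₂²)r₁ + ∂Q/∂r₂(r₁, r₂) · (α₃r₁² + α₄r₂²)r₂ = 0. -/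
/-!
Writing `x = r₁²`, `y = r₂²`, `Q = u^(2(α₁ - α₃)) w^β` with `u = r₁^α₄ / r₂^α₂`,
`w = (α₁ - α₃) x / y + α₂ - α₄` and `β = α₂α₃ - α₁α₄`, the derivative of `Q` along the vector
field is `Q` times the derivative of `log Q`. Along the flow,
`(log u)˙ = α₄ ṙ₁/r₁ - α₂ ṙ₂/r₂ = -β x` and `ẇ = 2(α₁ - α₃) x w`,
so `(log Q)˙ = 2(α₁ - α₃)(-β x) + β · 2(α₁ - α₃) x = 0`.
-/

open Real

theorem HasDerivAt.rpow_const_mul_rpow_const {u v : ℝ → ℝ} {u' v' x : ℝ} (a b : ℝ)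
    (hu : HasDerivAt u u' x) (hv : HasDerivAt v v' x) (hux : 0 < u x) (hvx : 0 < v x) :
    HasDerivAt (fun s => u s ^ a * v s ^ b)
      (u x ^ a * v x ^ b * (a * u' / u x + b * v' / v x)) x := by
  refine ((hu.rpow_const (.inl hux.ne')).mul (hv.rpow_const (.inl hvx.ne'))).congr_deriv ?_
  rw [rpow_sub_one hux.ne', rpow_sub_one hvx.ne']
  field_simp

theorem first_integral_doubleHopf_planar_general (α₁ α₂ α₃ α₄ : ℝ) :
    ∀ r₁ r₂ : ℝ, 0 < r₁ → 0 < r₂ →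
      0 < (α₁ - α₃) * r₁ ^ 2 + (α₂ - α₄) * r₂ ^ 2 →
      deriv (fun s : ℝ => (s ^ α₄ / r₂ ^ α₂) ^ (2 * (α₁ - α₃))
            * ((α₁ - α₃) * s ^ 2 / r₂ ^ 2 + α₂ - α₄) ^ (α₂ * α₃ - α₁ * α₄)) r₁
          * ((α₁ * r₁ ^ 2 + α₂ * r₂ ^ 2) * r₁)
        + deriv (fun s : ℝ => (r₁ ^ α₄ / s ^ α₂) ^ (2 * (α₁ - α₃))
            * ((α₁ - α₃) * r₁ ^ 2 / s ^ 2 + α₂ - α₄) ^ (α₂ * α₃ - α₁ * α₄)) r₂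
          * ((α₃ * r₁ ^ 2 + α₄ * r₂ ^ 2) * r₂) = 0 := by
  intro r₁ r₂ hr₁ hr₂ hD
  have hu : 0 < r₁ ^ α₄ / r₂ ^ α₂ := by positivity
  have hw : 0 < (α₁ - α₃) * r₁ ^ 2 / r₂ ^ 2 + α₂ - α₄ := by
    have : (α₁ - α₃) * r₁ ^ 2 / r₂ ^ 2 + α₂ - α₄
        = ((α₁ - α₃) * r₁ ^ 2 + (α₂ - α₄) * r₂ ^ 2) / r₂ ^ 2 := by
      field_simp; ring
    rw [this]; positivity
  have h₁ := HasDerivAt.rpow_const_mul_rpow_const (2 * (α₁ - α₃)) (α₂ * α₃ - α₁ * α₄)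
    ((hasDerivAt_rpow_const (x := r₁) (p := α₄) (.inl hr₁.ne')).div_const (r₂ ^ α₂))
    (((hasDerivAt_pow 2 r₁).const_mul (α₁ - α₃)).div_const (r₂ ^ 2) |>.add_const α₂ |>.sub_const α₄)
    hu hw
  have h₂ := HasDerivAt.rpow_const_mul_rpow_const (2 * (α₁ - α₃)) (α₂ * α₃ - α₁ * α₄)
    ((hasDerivAt_const r₂ (r₁ ^ α₄)).fun_div (hasDerivAt_rpow_const (.inl hr₂.ne')) (by positivity))
    ((hasDerivAt_const r₂ ((α₁ - α₃) * r₁ ^ 2)).fun_div (hasDerivAt_pow 2 r₂) (by positivity)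
      |>.add_const α₂ |>.sub_const α₄)
    hu hw
  rw [h₁.deriv, h₂.deriv]
  -- a single `field_simp` with `w` unfolded does not reach a form `ring` can close
  set w := (α₁ - α₃) * r₁ ^ 2 / r₂ ^ 2 + α₂ - α₄ with hw_def
  rw [rpow_sub_one hr₁.ne', rpow_sub_one hr₂.ne']
  field_simp
  rw [hw_def]
  field_simp
  ring

/-- On the set `r₁, r₂ > 0`, `(α₁ − α₃)r₁² + (α₂ − α₄)r₂² > 0`, the function
`Q(r₁, r₂) = (r₁^α₄ / r₂^α₂)^(2(α₁ − α₃)) ((α₁ − α₃)r₁²/r₂² + α₂ − α₄)^(α₂α₃ − α₁α₄)`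
is a first integral of the planar system `ṙ₁ = (α₁r₁² + α₂r₂²)r₁`,
`ṙ₂ = (α₃r₁² + α₄r₂²)r₂` (partial derivatives taken as derivatives of the
one-variable slices). -/
theorem first_integral_doubleHopf_planar (α₁ α₂ α₃ α₄ : ℝ) (hα : α₁ ≠ α₃) :
    ∀ r₁ r₂ : ℝ, 0 < r₁ → 0 < r₂ →
      0 < (α₁ - α₃) * r₁ ^ 2 + (α₂ - α₄) * r₂ ^ 2 →
      deriv (fun s : ℝ => (s ^ α₄ / r₂ ^ α₂) ^ (2 * (α₁ - α₃))
            * ((α₁ - α₃) * s ^ 2 / r₂ ^ 2 + α₂ - α₄) ^ (α₂ * α₃ - α₁ * α₄)) r₁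
          * ((α₁ * r₁ ^ 2 + α₂ * r₂ ^ 2) * r₁)
        + deriv (fun s : ℝ => (r₁ ^ α₄ / s ^ α₂) ^ (2 * (α₁ - α₃))
            * ((α₁ - α₃) * r₁ ^ 2 / s ^ 2 + α₂ - α₄) ^ (α₂ * α₃ - α₁ * α₄)) r₂
          * ((α₃ * r₁ ^ 2 + α₄ * r₂ ^ 2) * r₂) = 0 :=
  first_integral_doubleHopf_planar_general α₁ α₂ α₃ α₄
end
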